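/- arXiv:2512.17858 — 7 statements merged into one kernel-verified Lean document; each statement's English description precedes it below -/
import Mathlib

section
/- (Theorem 2, single agent, finite-randomization version: calibrated mechanisms and two-stage mechanisms implement the same outcome distributions.) A function ϑ : A × Θ × Ω → ℝ equals the outcome distribution ϑ_φ of some calibrated-incentive-compatible and calibrated-individually-rational finitely randomized mechanism φ (for some finite set E and randomization weights η) if and only if ϑ equals the outcome distribution of some incentive compatible and individually rational finite two-stage mechanism (M, β, ν, α), i.e. ϑ(a,θ,ω) = μ0 ω · f θ · Σ_{m∈M} β ω m · α θ m a. -/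
open Finset
open scoped Classical

/-- The total probability that the calibrated information structure of the finitely randomized
mechanism `φ` produces the signal (interim allocation rule) `s0`. -/
noncomputable def sigProb {A Θ Ω : Type} [Fintype A] [Fintype Θ] [Fintype Ω] {E : ℕ}
    (μ0 : Ω → ℝ) (η : Fin E → ℝ) (φ : Θ → Ω → Fin E → A → ℝ) (s0 : Θ → A → ℝ) : ℝ :=
  ∑ ω, ∑ ε, if (fun θ a => φ θ ω ε a) = s0 then μ0 ω * η ε else 0

/-- The posterior probability of state `ω` given signal `s0`. -/
noncomputable def sigPost {A Θ Ω : Type} [Fintype A] [Fintype Θ] [Fintype Ω] {E : ℕ}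
    (μ0 : Ω → ℝ) (η : Fin E → ℝ) (φ : Θ → Ω → Fin E → A → ℝ) (s0 : Θ → A → ℝ) (ω : Ω) : ℝ :=
  (∑ ε, if (fun θ a => φ θ ω ε a) = s0 then μ0 ω * η ε else 0) / sigProb μ0 η φ s0

/-- Calibrated incentive compatibility: at every signal of positive probability, truthful
reporting is optimal given the posterior belief. -/
def CalibratedIC {A Θ Ω : Type} [Fintype A] [Fintype Θ] [Fintype Ω] {E : ℕ}
    (μ0 : Ω → ℝ) (η : Fin E → ℝ) (u : A → Θ → Ω → ℝ) (φ : Θ → Ω → Fin E → A → ℝ) : Prop :=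
  ∀ s0 : Θ → A → ℝ, 0 < sigProb μ0 η φ s0 → ∀ θ θ',
    ∑ ω, sigPost μ0 η φ s0 ω * ∑ a, s0 θ a * u a θ ω ≥
      ∑ ω, sigPost μ0 η φ s0 ω * ∑ a, s0 θ' a * u a θ ω

/-- Calibrated individual rationality: at every signal of positive probability, participation
is optimal given the posterior belief. -/
def CalibratedIR {A Θ Ω : Type} [Fintype A] [Fintype Θ] [Fintype Ω] {E : ℕ}
    (μ0 : Ω → ℝ) (η : Fin E → ℝ) (u : A → Θ → Ω → ℝ) (a0 : A)
    (φ : Θ → Ω → Fin E → A → ℝ) : Prop :=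
  ∀ s0 : Θ → A → ℝ, 0 < sigProb μ0 η φ s0 → ∀ θ,
    ∑ ω, sigPost μ0 η φ s0 ω * ∑ a, s0 θ a * u a θ ω ≥
      ∑ ω, sigPost μ0 η φ s0 ω * u a0 θ ω

/-!
The incentive and participation constraints at a signal are linear inequalities in the
unnormalised posterior `ω ↦ μ0 ω · P(signal | ω)`, so they survive rescaling and the pooling of
several signals into one. A calibrated mechanism becomes a two-stage one whose messages
are its signals, i.e. its interim allocation rules, with Bayes posteriors. Conversely, a two-stage
mechanism becomes a calibrated one by drawing a message independently in every state
(`ε : Ω → M` with weight `∏ ω, β ω (ε ω)`): the state-`ω` marginal is `β ω`, and a signal of the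
resulting mechanism pools all messages with the same allocation rule.
-/

section

variable {A Θ Ω : Type}

def IsICIR [Fintype A] [Fintype Ω] (u : A → Θ → Ω → ℝ) (a0 : A) (s : Θ → A → ℝ) (q : Ω → ℝ) :
    Prop :=
  (∀ θ θ', ∑ ω, q ω * ∑ a, s θ a * u a θ ω ≥ ∑ ω, q ω * ∑ a, s θ' a * u a θ ω) ∧
    ∀ θ, ∑ ω, q ω * ∑ a, s θ a * u a θ ω ≥ ∑ ω, q ω * u a0 θ ω

section IsICIR

variable [Fintype A] [Fintype Ω] {u : A → Θ → Ω → ℝ} {a0 : A} {s : Θ → A → ℝ}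

lemma isICIR_zero : IsICIR u a0 s fun _ => 0 := by
  simp [IsICIR]

lemma isICIR_const_mul_iff {c : ℝ} (hc : 0 < c) {q : Ω → ℝ} :
    IsICIR u a0 s (fun ω => c * q ω) ↔ IsICIR u a0 s q := by
  simp only [IsICIR, mul_assoc, ← mul_sum, ge_iff_le, mul_le_mul_iff_right₀ hc]

lemma IsICIR.sum {ι : Type} {t : Finset ι} {q : ι → Ω → ℝ} (h : ∀ i ∈ t, IsICIR u a0 s (q i)) :
    IsICIR u a0 s fun ω => ∑ i ∈ t, q i ω := by
  simp only [IsICIR, sum_mul, ge_iff_le] at h ⊢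
  refine ⟨fun θ θ' => ?_, fun θ => ?_⟩ <;> rw [sum_comm, sum_comm (s := univ)]
  exacts [sum_le_sum fun i hi => (h i hi).1 θ θ', sum_le_sum fun i hi => (h i hi).2 θ]

lemma isICIR_iff_of_mul_eq {q w : Ω → ℝ} {p : ℝ} (hp : 0 ≤ p) (hq : ∀ ω, q ω * p = w ω) :
    (0 < p → IsICIR u a0 s q) ↔ IsICIR u a0 s w := by
  obtain rfl : w = fun ω => p * q ω := funext fun ω => by rw [← hq, mul_comm]
  rcases hp.lt_or_eq with hp | rfl
  · simp only [hp, forall_const, isICIR_const_mul_iff hp]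
  · simp [isICIR_zero]

end IsICIR

section Calibrated

variable [Fintype A] [Fintype Θ] {E : ℕ} {μ0 : Ω → ℝ} {η : Fin E → ℝ}

-- The `Fintype` instances give the `if` the decidability instance used in `sigPost`, so that
-- `sigPost = sigWeight / sigProb` holds by `rfl`.
noncomputable def sigWeight (μ0 : Ω → ℝ) (η : Fin E → ℝ) (φ : Θ → Ω → Fin E → A → ℝ)
    (s0 : Θ → A → ℝ) (ω : Ω) : ℝ :=
  ∑ ε, if (fun θ a => φ θ ω ε a) = s0 then μ0 ω * η ε else 0

lemma sigWeight_nonneg (hμ0 : ∀ ω, 0 ≤ μ0 ω) (hη : ∀ ε, 0 ≤ η ε) (φ : Θ → Ω → Fin E → A → ℝ)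
    (s0 : Θ → A → ℝ) (ω : Ω) : 0 ≤ sigWeight μ0 η φ s0 ω :=
  sum_nonneg fun ε _ => by split_ifs <;> first | exact mul_nonneg (hμ0 ω) (hη ε) | rfl

variable [Fintype Ω] {φ : Θ → Ω → Fin E → A → ℝ}

lemma sigPost_mul_sigProb (hμ0 : ∀ ω, 0 ≤ μ0 ω) (hη : ∀ ε, 0 ≤ η ε) (s0 : Θ → A → ℝ) (ω : Ω) :
    sigPost μ0 η φ s0 ω * sigProb μ0 η φ s0 = sigWeight μ0 η φ s0 ω := by
  by_cases hp : sigProb μ0 η φ s0 = 0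
  · rw [hp, mul_zero, eq_comm]
    exact congrFun ((Fintype.sum_eq_zero_iff_of_nonneg (sigWeight_nonneg hμ0 hη φ s0)).1 hp) ω
  · exact div_mul_cancel₀ (sigWeight μ0 η φ s0 ω) hp

lemma calibratedIC_and_calibratedIR_iff (u : A → Θ → Ω → ℝ) (a0 : A) (hμ0 : ∀ ω, 0 ≤ μ0 ω)
    (hη : ∀ ε, 0 ≤ η ε) :
    CalibratedIC μ0 η u φ ∧ CalibratedIR μ0 η u a0 φ ↔
      ∀ s0, IsICIR u a0 s0 (sigWeight μ0 η φ s0) := by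
  calc CalibratedIC μ0 η u φ ∧ CalibratedIR μ0 η u a0 φ
      ↔ ∀ s0, 0 < sigProb μ0 η φ s0 → IsICIR u a0 s0 (sigPost μ0 η φ s0) :=
        ⟨fun ⟨hIC, hIR⟩ s0 hp => ⟨hIC s0 hp, hIR s0 hp⟩,
          fun h => ⟨fun s0 hp => (h s0 hp).1, fun s0 hp => (h s0 hp).2⟩⟩
    _ ↔ _ := forall_congr' fun s0 => isICIR_iff_of_mul_eq
        (sum_nonneg fun ω _ => sigWeight_nonneg hμ0 hη φ s0 ω) (sigPost_mul_sigProb hμ0 hη s0)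

end Calibrated

section TwoStage

variable [Fintype A] [Fintype Ω] {κ : Type} {μ0 : Ω → ℝ} {β : Ω → κ → ℝ}

lemma twoStage_IC_and_IR_iff (u : A → Θ → Ω → ℝ) (a0 : A) (ν : κ → Ω → ℝ) (α : Θ → κ → A → ℝ)
    (hμ0 : ∀ ω, 0 ≤ μ0 ω) (hβ : ∀ ω m, 0 ≤ β ω m)
    (hν : ∀ m ω, ν m ω * (∑ ω', μ0 ω' * β ω' m) = μ0 ω * β ω m) :
    ((∀ m, 0 < (∑ ω', μ0 ω' * β ω' m) → ∀ θ θ',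
        ∑ ω, ν m ω * ∑ a, α θ m a * u a θ ω ≥ ∑ ω, ν m ω * ∑ a, α θ' m a * u a θ ω) ∧
      (∀ m, 0 < (∑ ω', μ0 ω' * β ω' m) → ∀ θ,
        ∑ ω, ν m ω * ∑ a, α θ m a * u a θ ω ≥ ∑ ω, ν m ω * u a0 θ ω)) ↔
      ∀ m, IsICIR u a0 (fun θ => α θ m) fun ω => μ0 ω * β ω m := by
  calc _ ↔ ∀ m, 0 < (∑ ω', μ0 ω' * β ω' m) → IsICIR u a0 (fun θ => α θ m) (ν m) :=
        ⟨fun ⟨hIC, hIR⟩ m hp => ⟨hIC m hp, hIR m hp⟩,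
          fun h => ⟨fun m hp => (h m hp).1, fun m hp => (h m hp).2⟩⟩
    _ ↔ _ := forall_congr' fun m => isICIR_iff_of_mul_eq
        (sum_nonneg fun ω _ => mul_nonneg (hμ0 ω) (hβ ω m)) (hν m)

end TwoStage

lemma sum_pushforward_mul {ι κ X : Type} [Fintype ι] [Fintype κ] [DecidableEq X] (σ : ι → X)
    (L : κ ↪ X) (hσ : ∀ i, σ i ∈ Set.range L) (η : ι → ℝ) (F : X → ℝ) :
    ∑ m, (∑ i, if σ i = L m then η i else 0) * F (L m) = ∑ i, η i * F (σ i) := by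
  simp only [sum_mul, ite_mul, zero_mul]
  rw [sum_comm]
  refine sum_congr rfl fun i _ => ?_
  obtain ⟨m₀, hm₀⟩ := hσ i
  simp only [← hm₀, L.injective.eq_iff, sum_ite_eq, mem_univ, if_true]

lemma sum_prod_mul_apply {Ω κ : Type} [Fintype Ω] [Fintype κ] [DecidableEq Ω]
    (β : Ω → κ → ℝ) (hβ : ∀ ω, ∑ m, β ω m = 1) (F : κ → ℝ) (ω : Ω) :
    ∑ x : Ω → κ, (∏ ω', β ω' (x ω')) * F (x ω) = ∑ m, β ω m * F m := by
  have hsplit : ∀ x : Ω → κ, (∏ ω', β ω' (x ω')) * F (x ω) =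
      ∏ ω', β ω' (x ω') * if ω' = ω then F (x ω') else 1 := fun x => by
    rw [prod_mul_distrib, Fintype.prod_ite_eq']
  simp only [hsplit, ← Fintype.prod_sum fun ω' m => β ω' m * if ω' = ω then F m else 1]
  rw [Fintype.prod_eq_single ω fun ω' hω' => by simp [hω', hβ]]
  simp

section BayesPosterior

variable [Fintype Ω] {κ : Type} {μ0 : Ω → ℝ} {β : Ω → κ → ℝ}

-- Any belief is Bayes-consistent at a message of probability zero; we take the prior there.
noncomputable def bayesPosterior (μ0 : Ω → ℝ) (β : Ω → κ → ℝ) (m : κ) (ω : Ω) : ℝ :=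
  if ∑ ω', μ0 ω' * β ω' m = 0 then μ0 ω else μ0 ω * β ω m / ∑ ω', μ0 ω' * β ω' m

lemma bayesPosterior_nonneg (hμ0 : ∀ ω, 0 ≤ μ0 ω) (hβ : ∀ ω m, 0 ≤ β ω m) (m : κ) (ω : Ω) :
    0 ≤ bayesPosterior μ0 β m ω := by
  unfold bayesPosterior
  split_ifs
  exacts [hμ0 ω, div_nonneg (mul_nonneg (hμ0 ω) (hβ ω m))
    (sum_nonneg fun ω' _ => mul_nonneg (hμ0 ω') (hβ ω' m))]

lemma sum_bayesPosterior (hμ0sum : ∑ ω, μ0 ω = 1) (m : κ) : ∑ ω, bayesPosterior μ0 β m ω = 1 := by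
  unfold bayesPosterior
  split_ifs with hp
  exacts [hμ0sum, by rw [← sum_div, div_self hp]]

lemma bayesPosterior_mul_sum (hμ0 : ∀ ω, 0 ≤ μ0 ω) (hβ : ∀ ω m, 0 ≤ β ω m) (m : κ) (ω : Ω) :
    bayesPosterior μ0 β m ω * (∑ ω', μ0 ω' * β ω' m) = μ0 ω * β ω m := by
  unfold bayesPosterior
  split_ifs with hp
  · rw [hp, mul_zero, eq_comm]
    exact (sum_eq_zero_iff_of_nonneg fun ω' _ => mul_nonneg (hμ0 ω') (hβ ω' m)).1 hp ω
      (mem_univ ω)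
  · exact div_mul_cancel₀ _ hp

end BayesPosterior

section SignalExperiment

variable [Fintype A] [Fintype Θ] {E : ℕ} {κ : Type}

noncomputable def signalExperiment (η : Fin E → ℝ) (φ : Θ → Ω → Fin E → A → ℝ)
    (L : κ → Θ → A → ℝ) (ω : Ω) (m : κ) : ℝ :=
  ∑ ε, if (fun θ a => φ θ ω ε a) = L m then η ε else 0

variable {η : Fin E → ℝ} {φ : Θ → Ω → Fin E → A → ℝ} {L : κ → Θ → A → ℝ}

lemma signalExperiment_nonneg (hη : ∀ ε, 0 ≤ η ε) (ω : Ω) (m : κ) :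
    0 ≤ signalExperiment η φ L ω m :=
  sum_nonneg fun ε _ => by split_ifs <;> first | exact hη ε | rfl

lemma mul_signalExperiment (μ0 : Ω → ℝ) (ω : Ω) (m : κ) :
    μ0 ω * signalExperiment η φ L ω m = sigWeight μ0 η φ (L m) ω := by
  simp only [signalExperiment, sigWeight, mul_sum, mul_ite, mul_zero]

end SignalExperiment

theorem exists_twoStage_of_calibrated [Fintype A] [Fintype Θ] [Fintype Ω]
    {μ0 : Ω → ℝ} (hμ0 : ∀ ω, 0 ≤ μ0 ω) (hμ0sum : ∑ ω, μ0 ω = 1)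
    {f : Θ → ℝ} {u : A → Θ → Ω → ℝ} {a0 : A} {ϑ : A → Θ → Ω → ℝ}
    {E : ℕ} {η : Fin E → ℝ} {φ : Θ → Ω → Fin E → A → ℝ}
    (hη : ∀ ε, 0 ≤ η ε) (hηsum : ∑ ε, η ε = 1)
    (hφ : ∀ θ ω ε a, 0 ≤ φ θ ω ε a) (hφsum : ∀ θ ω ε, ∑ a, φ θ ω ε a = 1)
    (hIC : CalibratedIC μ0 η u φ) (hIR : CalibratedIR μ0 η u a0 φ)
    (hϑ : ∀ a θ ω, ϑ a θ ω = μ0 ω * f θ * ∑ ε, η ε * φ θ ω ε a) :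
    ∃ (k : ℕ) (β : Ω → Fin k → ℝ) (ν : Fin k → Ω → ℝ) (α : Θ → Fin k → A → ℝ),
        (∀ ω m, 0 ≤ β ω m) ∧ (∀ ω, ∑ m, β ω m = 1) ∧
        (∀ m ω, 0 ≤ ν m ω) ∧ (∀ m, ∑ ω, ν m ω = 1) ∧
        (∀ m ω, ν m ω * (∑ ω', μ0 ω' * β ω' m) = μ0 ω * β ω m) ∧
        (∀ θ m a, 0 ≤ α θ m a) ∧ (∀ θ m, ∑ a, α θ m a = 1) ∧
        (∀ m, 0 < (∑ ω', μ0 ω' * β ω' m) → ∀ θ θ',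
          ∑ ω, ν m ω * ∑ a, α θ m a * u a θ ω ≥
            ∑ ω, ν m ω * ∑ a, α θ' m a * u a θ ω) ∧
        (∀ m, 0 < (∑ ω', μ0 ω' * β ω' m) → ∀ θ,
          ∑ ω, ν m ω * ∑ a, α θ m a * u a θ ω ≥ ∑ ω, ν m ω * u a0 θ ω) ∧
        (∀ a θ ω, ϑ a θ ω = μ0 ω * f θ * ∑ m, β ω m * α θ m a) := by
  obtain ⟨k, L, hL⟩ :=
    (Set.finite_range fun p : Ω × Fin E => fun θ a => φ θ p.1 p.2 a).fin_embedding
  have hsignal : ∀ ω ε, (fun θ a => φ θ ω ε a) ∈ Set.range L := fun ω ε => hL ▸ ⟨(ω, ε), rfl⟩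
  have hrow : ∀ θ m, (∀ a, 0 ≤ L m θ a) ∧ ∑ a, L m θ a = 1 := fun θ m => by
    obtain ⟨⟨ω, ε⟩, hm⟩ := hL.le ⟨m, rfl⟩
    simp only [← hm]
    exact ⟨hφ θ ω ε, hφsum θ ω ε⟩
  set β := signalExperiment η φ L
  have hβ : ∀ ω m, 0 ≤ β ω m := signalExperiment_nonneg hη
  have hpush : ∀ ω (F : (Θ → A → ℝ) → ℝ),
      ∑ m, β ω m * F (L m) = ∑ ε, η ε * F fun θ a => φ θ ω ε a :=
    fun ω => sum_pushforward_mul _ L (hsignal ω) η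
  obtain ⟨hIC', hIR'⟩ := (twoStage_IC_and_IR_iff u a0 (bayesPosterior μ0 β) (fun θ m a => L m θ a)
    hμ0 hβ (bayesPosterior_mul_sum hμ0 hβ)).2 fun m => by
      convert (calibratedIC_and_calibratedIR_iff u a0 hμ0 hη).1 ⟨hIC, hIR⟩ (L m) using 1
      exact funext fun ω => mul_signalExperiment μ0 ω m
  exact ⟨k, β, bayesPosterior μ0 β, fun θ m a => L m θ a, hβ,
    fun ω => by simpa [hηsum] using hpush ω 1, bayesPosterior_nonneg hμ0 hβ,
    sum_bayesPosterior hμ0sum, bayesPosterior_mul_sum hμ0 hβ, fun θ m => (hrow θ m).1,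
    fun θ m => (hrow θ m).2, hIC', hIR', fun a θ ω => by rw [hϑ, hpush ω fun s => s θ a]⟩

theorem exists_calibrated_of_twoStage [Fintype A] [Fintype Θ] [Fintype Ω]
    {μ0 : Ω → ℝ} (hμ0 : ∀ ω, 0 ≤ μ0 ω)
    {f : Θ → ℝ} {u : A → Θ → Ω → ℝ} {a0 : A} {ϑ : A → Θ → Ω → ℝ}
    {k : ℕ} {β : Ω → Fin k → ℝ} {ν : Fin k → Ω → ℝ} {α : Θ → Fin k → A → ℝ}
    (hβ : ∀ ω m, 0 ≤ β ω m) (hβsum : ∀ ω, ∑ m, β ω m = 1)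
    (hν : ∀ m ω, ν m ω * (∑ ω', μ0 ω' * β ω' m) = μ0 ω * β ω m)
    (hα : ∀ θ m a, 0 ≤ α θ m a) (hαsum : ∀ θ m, ∑ a, α θ m a = 1)
    (hIC : ∀ m, 0 < (∑ ω', μ0 ω' * β ω' m) → ∀ θ θ',
      ∑ ω, ν m ω * ∑ a, α θ m a * u a θ ω ≥ ∑ ω, ν m ω * ∑ a, α θ' m a * u a θ ω)
    (hIR : ∀ m, 0 < (∑ ω', μ0 ω' * β ω' m) → ∀ θ,
      ∑ ω, ν m ω * ∑ a, α θ m a * u a θ ω ≥ ∑ ω, ν m ω * u a0 θ ω)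
    (hϑ : ∀ a θ ω, ϑ a θ ω = μ0 ω * f θ * ∑ m, β ω m * α θ m a) :
    ∃ (E : ℕ) (η : Fin E → ℝ) (φ : Θ → Ω → Fin E → A → ℝ),
        (∀ ε, 0 ≤ η ε) ∧ (∑ ε, η ε = 1) ∧
        (∀ θ ω ε a, 0 ≤ φ θ ω ε a) ∧ (∀ θ ω ε, ∑ a, φ θ ω ε a = 1) ∧
        CalibratedIC μ0 η u φ ∧ CalibratedIR μ0 η u a0 φ ∧
        (∀ a θ ω, ϑ a θ ω = μ0 ω * f θ * ∑ ε, η ε * φ θ ω ε a) := by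
  set e := (Fintype.equivFin (Ω → Fin k)).symm
  set η : Fin (Fintype.card (Ω → Fin k)) → ℝ := fun ε => ∏ ω, β ω (e ε ω)
  set φ : Θ → Ω → Fin (Fintype.card (Ω → Fin k)) → A → ℝ := fun θ ω ε a => α θ (e ε ω) a
  have hη : ∀ ε, 0 ≤ η ε := fun ε => prod_nonneg fun ω _ => hβ ω _
  have hmarginal : ∀ ω (F : Fin k → ℝ), ∑ ε, η ε * F (e ε ω) = ∑ m, β ω m * F m := fun ω F =>
    (e.sum_comp fun x => (∏ ω', β ω' (x ω')) * F (x ω)).trans (sum_prod_mul_apply β hβsum F ω)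
  have hweight : ∀ s0 ω, sigWeight μ0 η φ s0 ω =
      ∑ m ∈ univ.filter (fun m => (fun θ a => α θ m a) = s0), μ0 ω * β ω m := fun s0 ω =>
    calc sigWeight μ0 η φ s0 ω
        = μ0 ω * ∑ ε, η ε * (if (fun θ a => α θ (e ε ω) a) = s0 then 1 else 0) := by
          simp only [sigWeight, mul_sum, mul_ite, mul_one, mul_zero, φ]
      _ = μ0 ω * ∑ m, β ω m * (if (fun θ a => α θ m a) = s0 then 1 else 0) := by
          rw [hmarginal ω fun m => if (fun θ a => α θ m a) = s0 then 1 else 0]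
      _ = _ := by simp only [sum_filter, mul_sum, mul_ite, mul_one, mul_zero]
  have hICIR := (twoStage_IC_and_IR_iff u a0 ν α hμ0 hβ hν).1 ⟨hIC, hIR⟩
  obtain ⟨hIC', hIR'⟩ := (calibratedIC_and_calibratedIR_iff u a0 hμ0 hη).2 fun s0 => by
    rw [funext (hweight s0)]
    exact IsICIR.sum fun m hm => (mem_filter.1 hm).2 ▸ hICIR m
  refine ⟨_, η, φ, hη, ?_, fun θ ω ε a => hα θ _ a, fun θ ω ε => hαsum θ _, hIC', hIR',
    fun a θ ω => by rw [hϑ, ← hmarginal]⟩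
  rw [e.sum_comp fun x => ∏ ω, β ω (x ω), ← Fintype.prod_sum]
  exact prod_eq_one fun ω _ => hβsum ω

end

theorem calibrated_iff_twoStage_general
    {A Θ Ω : Type} [Fintype A] [Fintype Θ] [Fintype Ω]
    (μ0 : Ω → ℝ) (hμ0 : ∀ ω, 0 ≤ μ0 ω) (hμ0sum : ∑ ω, μ0 ω = 1)
    (f : Θ → ℝ)
    (u : A → Θ → Ω → ℝ) (a0 : A)
    (ϑ : A → Θ → Ω → ℝ) :
    (∃ (E : ℕ) (η : Fin E → ℝ) (φ : Θ → Ω → Fin E → A → ℝ),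
        (∀ ε, 0 ≤ η ε) ∧ (∑ ε, η ε = 1) ∧
        (∀ θ ω ε a, 0 ≤ φ θ ω ε a) ∧ (∀ θ ω ε, ∑ a, φ θ ω ε a = 1) ∧
        CalibratedIC μ0 η u φ ∧ CalibratedIR μ0 η u a0 φ ∧
        (∀ a θ ω, ϑ a θ ω = μ0 ω * f θ * ∑ ε, η ε * φ θ ω ε a))
    ↔
    (∃ (k : ℕ) (β : Ω → Fin k → ℝ) (ν : Fin k → Ω → ℝ) (α : Θ → Fin k → A → ℝ),
        (∀ ω m, 0 ≤ β ω m) ∧ (∀ ω, ∑ m, β ω m = 1) ∧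
        (∀ m ω, 0 ≤ ν m ω) ∧ (∀ m, ∑ ω, ν m ω = 1) ∧
        (∀ m ω, ν m ω * (∑ ω', μ0 ω' * β ω' m) = μ0 ω * β ω m) ∧
        (∀ θ m a, 0 ≤ α θ m a) ∧ (∀ θ m, ∑ a, α θ m a = 1) ∧
        (∀ m, 0 < (∑ ω', μ0 ω' * β ω' m) → ∀ θ θ',
          ∑ ω, ν m ω * ∑ a, α θ m a * u a θ ω ≥
            ∑ ω, ν m ω * ∑ a, α θ' m a * u a θ ω) ∧
        (∀ m, 0 < (∑ ω', μ0 ω' * β ω' m) → ∀ θ,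
          ∑ ω, ν m ω * ∑ a, α θ m a * u a θ ω ≥ ∑ ω, ν m ω * u a0 θ ω) ∧
        (∀ a θ ω, ϑ a θ ω = μ0 ω * f θ * ∑ m, β ω m * α θ m a)) := by
  constructor
  · rintro ⟨E, η, φ, hη, hηsum, hφ, hφsum, hIC, hIR, hϑ⟩
    exact exists_twoStage_of_calibrated hμ0 hμ0sum hη hηsum hφ hφsum hIC hIR hϑ
  · rintro ⟨k, β, ν, α, hβ, hβsum, -, -, hν, hα, hαsum, hIC, hIR, hϑ⟩
    exact exists_calibrated_of_twoStage hμ0 hβ hβsum hν hα hαsum hIC hIR hϑ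

/-- Theorem 2 (single agent): an outcome distribution is implementable by a calibrated
(incentive compatible and individually rational) finitely randomized mechanism if and only if
it is implementable by an incentive compatible and individually rational finite two-stage
mechanism. -/
theorem calibrated_iff_twoStage
    {A Θ Ω : Type} [Fintype A] [Fintype Θ] [Fintype Ω]
    [Nonempty A] [Nonempty Θ] [Nonempty Ω]
    (μ0 : Ω → ℝ) (hμ0 : ∀ ω, 0 ≤ μ0 ω) (hμ0sum : ∑ ω, μ0 ω = 1)
    (f : Θ → ℝ) (hf : ∀ θ, 0 ≤ f θ) (hfsum : ∑ θ, f θ = 1)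
    (u : A → Θ → Ω → ℝ) (a0 : A)
    (ϑ : A → Θ → Ω → ℝ) :
    (∃ (E : ℕ) (η : Fin E → ℝ) (φ : Θ → Ω → Fin E → A → ℝ),
        (∀ ε, 0 ≤ η ε) ∧ (∑ ε, η ε = 1) ∧
        (∀ θ ω ε a, 0 ≤ φ θ ω ε a) ∧ (∀ θ ω ε, ∑ a, φ θ ω ε a = 1) ∧
        CalibratedIC μ0 η u φ ∧ CalibratedIR μ0 η u a0 φ ∧
        (∀ a θ ω, ϑ a θ ω = μ0 ω * f θ * ∑ ε, η ε * φ θ ω ε a))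
    ↔
    (∃ (k : ℕ) (β : Ω → Fin k → ℝ) (ν : Fin k → Ω → ℝ) (α : Θ → Fin k → A → ℝ),
        (∀ ω m, 0 ≤ β ω m) ∧ (∀ ω, ∑ m, β ω m = 1) ∧
        (∀ m ω, 0 ≤ ν m ω) ∧ (∀ m, ∑ ω, ν m ω = 1) ∧
        (∀ m ω, ν m ω * (∑ ω', μ0 ω' * β ω' m) = μ0 ω * β ω m) ∧
        (∀ θ m a, 0 ≤ α θ m a) ∧ (∀ θ m, ∑ a, α θ m a = 1) ∧
        (∀ m, 0 < (∑ ω', μ0 ω' * β ω' m) → ∀ θ θ',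
          ∑ ω, ν m ω * ∑ a, α θ m a * u a θ ω ≥
            ∑ ω, ν m ω * ∑ a, α θ' m a * u a θ ω) ∧
        (∀ m, 0 < (∑ ω', μ0 ω' * β ω' m) → ∀ θ,
          ∑ ω, ν m ω * ∑ a, α θ m a * u a θ ω ≥ ∑ ω, ν m ω * u a0 θ ω) ∧
        (∀ a θ ω, ϑ a θ ω = μ0 ω * f θ * ∑ m, β ω m * α θ m a)) :=
  calibrated_iff_twoStage_general μ0 hμ0 hμ0sum f u a0 ϑ
end

section
/- (Lemma 'martingale property under weak* convergence'.) For P-almost every x ∈ X, the probability measures κ_t x converge to κ_∞ x in the topology of weak convergence of probability measures on Y as t → ∞. That is, conditional distributions of Z given a filtration converge weak* almost surely to the conditional distribution given the limit σ-algebra. -/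
open MeasureTheory Filter Topology
open scoped BoundedContinuousFunction

/-! Lévy's upward theorem gives, for each fixed continuous `g`, almost sure convergence of
`∫ g d(κ t x)` to `∫ g d(κlim x)`. Since `Y` is compact metric, `C(Y, ℝ)` is separable, so off a
null set this holds simultaneously for a countable dense family of test functions. Integration
against a probability measure is `1`-Lipschitz in the sup norm, so convergence on a dense family
extends to all bounded continuous functions, which is weak convergence. -/

namespace MeasureTheory

theorem ae_tendsto_of_ae_eq_condExp {Ω : Type*} {m : MeasurableSpace Ω} {μ : Measure Ω}
    [IsFiniteMeasure μ] {ℱ : Filtration ℕ m} {f : Ω → ℝ} {φ : ℕ → Ω → ℝ} {φlim : Ω → ℝ}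
    (hφ : ∀ n, φ n =ᵐ[μ] μ[f | ℱ n]) (hφlim : φlim =ᵐ[μ] μ[f | ⨆ n, ℱ n]) :
    ∀ᵐ x ∂μ, Tendsto (φ · x) atTop (𝓝 (φlim x)) := by
  filter_upwards [tendsto_ae_condExp f, ae_all_iff.2 hφ, hφlim] with x hx hφx hφlimx
  rw [hφlimx]
  exact hx.congr fun n => (hφx n).symm

namespace ProbabilityMeasure

variable {Ω : Type*} [MeasurableSpace Ω] [TopologicalSpace Ω] [OpensMeasurableSpace Ω]

theorem lipschitzWith_one_integral (μ : ProbabilityMeasure Ω) :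
    LipschitzWith 1 fun f : Ω →ᵇ ℝ => ∫ ω, f ω ∂(μ : Measure Ω) :=
  LipschitzWith.of_dist_le_mul fun f g => by
    rw [NNReal.coe_one, one_mul, dist_eq_norm, dist_eq_norm,
      ← integral_sub (f.integrable _) (g.integrable _)]
    exact (f - g).norm_integral_le_norm _

theorem tendsto_of_forall_mem_dense_integral_tendsto {γ : Type*} {F : Filter γ}
    {μs : γ → ProbabilityMeasure Ω} {μ : ProbabilityMeasure Ω} {S : Set (Ω →ᵇ ℝ)}
    (hS : Dense S)
    (h : ∀ f ∈ S, Tendsto (fun i => ∫ ω, f ω ∂(μs i : Measure Ω)) F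
      (𝓝 (∫ ω, f ω ∂(μ : Measure Ω)))) :
    Tendsto μs F (𝓝 μ) := by
  have hclosed : IsClosed {f : Ω →ᵇ ℝ | Tendsto (fun i => ∫ ω, f ω ∂(μs i : Measure Ω)) F
      (𝓝 (∫ ω, f ω ∂(μ : Measure Ω)))} :=
    (LipschitzWith.uniformEquicontinuous _ 1 fun i => lipschitzWith_one_integral (μs i))
      |>.equicontinuous.isClosed_setOfPred_tendsto (lipschitzWith_one_integral μ).continuous
  rw [tendsto_iff_forall_integral_tendsto]
  exact fun f => hclosed.closure_subset_iff.2 h (hS f)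

end ProbabilityMeasure

end MeasureTheory

theorem conditional_distributions_converge_weakStar_general
    {X : Type*} [mX : MeasurableSpace X] (P : Measure X) [IsProbabilityMeasure P]
    (ℱ : Filtration ℕ mX)
    {Y : Type*} [MetricSpace Y] [CompactSpace Y] [MeasurableSpace Y] [BorelSpace Y]
    (Z : X → Y)
    (κ : ℕ → X → ProbabilityMeasure Y) (κlim : X → ProbabilityMeasure Y)
    (hcond : ∀ (g : Y → ℝ), Continuous g → ∀ t : ℕ,
      (fun x => ∫ y, g y ∂(κ t x : Measure Y)) =ᵐ[P] P[(fun x => g (Z x)) | ℱ t])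
    (hcondLim : ∀ (g : Y → ℝ), Continuous g →
      (fun x => ∫ y, g y ∂(κlim x : Measure Y)) =ᵐ[P]
        P[(fun x => g (Z x)) | ⨆ t, (ℱ t : MeasurableSpace X)]) :
    ∀ᵐ x ∂P, Tendsto (fun t => κ t x) atTop (𝓝 (κlim x)) := by
  have : TopologicalSpace.SeparableSpace (Y →ᵇ ℝ) :=
    (ContinuousMap.isometryEquivBoundedOfCompact Y ℝ).surjective.denseRange.separableSpace
      (ContinuousMap.isometryEquivBoundedOfCompact Y ℝ).continuous
  obtain ⟨S, hS_countable, hS_dense⟩ := TopologicalSpace.exists_countable_dense (Y →ᵇ ℝ)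
  have hS : ∀ᵐ x ∂P, ∀ g ∈ S, Tendsto (fun t => ∫ y, g y ∂(κ t x : Measure Y)) atTop
      (𝓝 (∫ y, g y ∂(κlim x : Measure Y))) :=
    (ae_ball_iff hS_countable).2 fun g _ =>
      ae_tendsto_of_ae_eq_condExp (hcond g g.continuous) (hcondLim g g.continuous)
  filter_upwards [hS] with x hx
  exact ProbabilityMeasure.tendsto_of_forall_mem_dense_integral_tendsto hS_dense hx

/-- Martingale property under weak* convergence: if `κ t x` is (a version of) the conditional
distribution of `Z` given `ℱ t`, and `κlim x` is a version of the conditional distribution of `Z`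
given `ℱ∞ = ⨆ t, ℱ t`, then for `P`-almost every `x` the probability measures `κ t x` converge
weakly to `κlim x`. -/
theorem conditional_distributions_converge_weakStar
    {X : Type*} [mX : MeasurableSpace X] (P : Measure X) [IsProbabilityMeasure P]
    (ℱ : Filtration ℕ mX)
    {Y : Type*} [MetricSpace Y] [CompactSpace Y] [MeasurableSpace Y] [BorelSpace Y]
    (Z : X → Y) (hZ : Measurable Z)
    (κ : ℕ → X → ProbabilityMeasure Y) (κlim : X → ProbabilityMeasure Y)
    (hint : ∀ (g : Y → ℝ), Continuous g → ∀ t : ℕ,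
      Integrable (fun x => ∫ y, g y ∂(κ t x : Measure Y)) P)
    (hintLim : ∀ (g : Y → ℝ), Continuous g →
      Integrable (fun x => ∫ y, g y ∂(κlim x : Measure Y)) P)
    (hcond : ∀ (g : Y → ℝ), Continuous g → ∀ t : ℕ,
      (fun x => ∫ y, g y ∂(κ t x : Measure Y)) =ᵐ[P] P[(fun x => g (Z x)) | ℱ t])
    (hcondLim : ∀ (g : Y → ℝ), Continuous g →
      (fun x => ∫ y, g y ∂(κlim x : Measure Y)) =ᵐ[P]
        P[(fun x => g (Z x)) | ⨆ t, (ℱ t : MeasurableSpace X)]) :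
    ∀ᵐ x ∂P, Tendsto (fun t => κ t x) atTop (𝓝 (κlim x)) :=
  conditional_distributions_converge_weakStar_general (mX := mX) P ℱ Z κ κlim hcond hcondLim
end

section
/- (Proposition that the two extended occupation measures have the same subsequential limits, concrete form.) Define, for T ≥ 1, the Borel probability measures on K × M: ν_T^1 := (1/T) Σ_{t=1}^{T} P.map (x ↦ (Y_t x, μ_t x)) and ν_T^2 := (1/T) Σ_{t=1}^{T} P.map (x ↦ (Y_t x, μ_{t+1} x)). Then (i) for every continuous g : K × M → ℝ, ∫ g dν_T^1 − ∫ g dν_T^2 → 0 as T → ∞; and (ii) the two sequences have the same weak subsequential limits: for every strictly increasing sequence (T_n) of positive integers and every Borel probability measure ν̄ on K × M, ν^1_{T_n} converges weakly to ν̄ if and only if ν^2_{T_n} converges weakly to ν̄. -/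
open MeasureTheory Filter Topology Finset
open scoped ENNReal

/-- The Cesàro-average occupation measure `(1/T) ∑_{t=1}^{T} P.map (F t)`. -/
noncomputable def cesaroOccupation {X Z : Type*} [MeasurableSpace X] [MeasurableSpace Z]
    (P : Measure X) (F : ℕ → X → Z) (T : ℕ) : Measure Z :=
  (T : ℝ≥0∞)⁻¹ • ∑ t ∈ Finset.Icc 1 T, Measure.map (F t) P

/-!
The beliefs `μ t x` and `μ (t + 1) x` are eventually close for almost every `x`, so for a
continuous `g` on the compact space `K × M` (hence bounded and uniformly continuous) dominated
convergence gives `∫ g (Y t, μ t) - g (Y t, μ (t + 1)) dP → 0`. The difference of the two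
occupation integrals is the Cesàro average of this null sequence, hence also tends to `0`; so
the two integral sequences have the same limits along any subsequence.
-/

theorem Filter.Tendsto.cesaro_Icc {u : ℕ → ℝ} {l : ℝ} (h : Tendsto u atTop (𝓝 l)) :
    Tendsto (fun T : ℕ => (T : ℝ)⁻¹ * ∑ t ∈ Icc 1 T, u t) atTop (𝓝 l) := by
  refine (h.comp (tendsto_add_atTop_nat 1)).cesaro.congr fun T => ?_
  rw [← Ico_add_one_right_eq_Icc, sum_Ico_eq_sum_range]
  simp only [Function.comp_apply, Nat.add_sub_cancel, add_comm]

theorem tendsto_iff_of_sub_tendsto_zero {ι E : Type*} [SeminormedAddCommGroup E] {l : Filter ι}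
    {f g : ι → E} {a : E} (h : Tendsto (fun i => f i - g i) l (𝓝 0)) :
    Tendsto f l (𝓝 a) ↔ Tendsto g l (𝓝 a) :=
  tendsto_iff_of_dist (by simpa [dist_eq_norm] using h.norm)

section cesaroOccupation

variable {X Z : Type*} [MeasurableSpace X] [MeasurableSpace Z] {P : Measure X}

theorem integral_cesaroOccupation {F : ℕ → X → Z} (hF : ∀ t, AEMeasurable (F t) P)
    {g : Z → ℝ} (hg : ∀ t, Integrable g (P.map (F t))) (T : ℕ) :
    ∫ z, g z ∂cesaroOccupation P F T = (T : ℝ)⁻¹ * ∑ t ∈ Icc 1 T, ∫ x, g (F t x) ∂P := by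
  rw [cesaroOccupation, integral_smul_measure, integral_finsetSum_measure fun t _ => hg t]
  simp only [ENNReal.toReal_inv, ENNReal.toReal_natCast, smul_eq_mul]
  congr 1
  exact sum_congr rfl fun t _ => integral_map (hF t) (hg t).aestronglyMeasurable

open scoped BoundedContinuousFunction Uniformity

variable [PseudoMetricSpace Z] [OpensMeasurableSpace Z] [IsFiniteMeasure P]
  {F G : ℕ → X → Z}

theorem tendsto_integral_sub_of_tendsto_dist (hF : ∀ t, AEMeasurable (F t) P)
    (hG : ∀ t, AEMeasurable (G t) P)
    (hdist : ∀ᵐ x ∂P, Tendsto (fun t => dist (F t x) (G t x)) atTop (𝓝 0))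
    (g : Z →ᵇ ℝ) (hg : UniformContinuous g) :
    Tendsto (fun t => ∫ x, g (F t x) - g (G t x) ∂P) atTop (𝓝 0) := by
  have hlim : ∀ᵐ x ∂P, Tendsto (fun t => g (F t x) - g (G t x)) atTop (𝓝 0) := by
    filter_upwards [hdist] with x hx
    have hpair : Tendsto (fun t => (F t x, G t x)) atTop (𝓤 Z) :=
      tendsto_uniformity_iff_dist_tendsto_zero.2 hx
    have hgpair := tendsto_uniformity_iff_dist_tendsto_zero.1 (Tendsto.comp hg hpair)
    exact tendsto_zero_iff_norm_tendsto_zero.2 (by simpa [dist_eq_norm] using hgpair)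
  simpa using tendsto_integral_of_dominated_convergence (fun _ => 2 * ‖g‖)
    (fun t => ((g.continuous.measurable.comp_aemeasurable (hF t)).sub
      (g.continuous.measurable.comp_aemeasurable (hG t))).aestronglyMeasurable)
    (integrable_const _)
    (fun t => Eventually.of_forall fun x => by
      simpa [dist_eq_norm] using g.dist_le_two_norm (F t x) (G t x))
    hlim

theorem tendsto_integral_cesaroOccupation_sub (hF : ∀ t, AEMeasurable (F t) P)
    (hG : ∀ t, AEMeasurable (G t) P)
    (hdist : ∀ᵐ x ∂P, Tendsto (fun t => dist (F t x) (G t x)) atTop (𝓝 0))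
    (g : Z →ᵇ ℝ) (hg : UniformContinuous g) :
    Tendsto (fun T => ∫ z, g z ∂cesaroOccupation P F T - ∫ z, g z ∂cesaroOccupation P G T)
      atTop (𝓝 0) := by
  have hgF t : Integrable (g ∘ F t) P := (g.integrable _).comp_aemeasurable (hF t)
  have hgG t : Integrable (g ∘ G t) P := (g.integrable _).comp_aemeasurable (hG t)
  refine (tendsto_integral_sub_of_tendsto_dist hF hG hdist g hg).cesaro_Icc.congr fun T => ?_
  rw [integral_cesaroOccupation hF (fun _ => g.integrable _),
    integral_cesaroOccupation hG (fun _ => g.integrable _), ← mul_sub, ← sum_sub_distrib]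
  exact congrArg _ (sum_congr rfl fun t _ => integral_sub (hgF t) (hgG t))

end cesaroOccupation

theorem extended_occupation_same_limits_general
    {X : Type*} [MeasurableSpace X] (P : Measure X) [IsProbabilityMeasure P]
    {K : Type*} [MetricSpace K] [CompactSpace K] [MeasurableSpace K] [BorelSpace K]
    {M : Type*} [MetricSpace M] [CompactSpace M] [MeasurableSpace M] [BorelSpace M]
    (Y : ℕ → X → K) (hY : ∀ t, Measurable (Y t))
    (μs : ℕ → X → M) (μlim : X → M)
    (hμs : ∀ t, Measurable (μs t))
    (hconv : ∀ᵐ x ∂P, Tendsto (fun t => μs t x) atTop (𝓝 (μlim x))) :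
    (∀ g : K × M → ℝ, Continuous g →
      Tendsto (fun T : ℕ =>
          (∫ z, g z ∂(cesaroOccupation P (fun t x => (Y t x, μs t x)) T)) -
            ∫ z, g z ∂(cesaroOccupation P (fun t x => (Y t x, μs (t + 1) x)) T))
        atTop (𝓝 0)) ∧
    (∀ Tn : ℕ → ℕ, StrictMono Tn → (∀ n, 0 < Tn n) →
      ∀ νbar : Measure (K × M), IsProbabilityMeasure νbar →
        ((∀ g : K × M → ℝ, Continuous g →
            Tendsto (fun n =>
                ∫ z, g z ∂(cesaroOccupation P (fun t x => (Y t x, μs t x)) (Tn n)))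
              atTop (𝓝 (∫ z, g z ∂νbar)))
          ↔
          (∀ g : K × M → ℝ, Continuous g →
            Tendsto (fun n =>
                ∫ z, g z ∂(cesaroOccupation P (fun t x => (Y t x, μs (t + 1) x)) (Tn n)))
              atTop (𝓝 (∫ z, g z ∂νbar))))) := by
  have hdist : ∀ᵐ x ∂P, Tendsto
      (fun t => dist (Y t x, μs t x) (Y t x, μs (t + 1) x)) atTop (𝓝 0) := by
    filter_upwards [hconv] with x hx
    simpa [Prod.dist_eq] using hx.dist (hx.comp (tendsto_add_atTop_nat 1))
  have hdiff (g : K × M → ℝ) (hg : Continuous g) := tendsto_integral_cesaroOccupation_sub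
    (fun t => ((hY t).prodMk (hμs t)).aemeasurable)
    (fun t => ((hY t).prodMk (hμs (t + 1))).aemeasurable) hdist
    (BoundedContinuousFunction.mkOfCompact ⟨g, hg⟩)
    (CompactSpace.uniformContinuous_of_continuous hg)
  refine ⟨hdiff, fun Tn hTn _ νbar _ => forall₂_congr fun g hg => ?_⟩
  exact tendsto_iff_of_sub_tendsto_zero ((hdiff g hg).comp hTn.tendsto_atTop)

/-- The two extended occupation measures
`ν_T^1 := (1/T) ∑_{t=1}^T P.map (x ↦ (Y t x, μ t x))` (beliefs at the beginning of the period)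
and `ν_T^2 := (1/T) ∑_{t=1}^T P.map (x ↦ (Y t x, μ (t+1) x))` (beliefs at the end of the period)
are asymptotically equivalent: (i) the integrals of any continuous function against them differ
by a quantity vanishing as `T → ∞`, and (ii) along any strictly increasing sequence of positive
integers, they have the same weak subsequential limits. -/
theorem extended_occupation_same_limits
    {X : Type*} [MeasurableSpace X] (P : Measure X) [IsProbabilityMeasure P]
    {K : Type*} [MetricSpace K] [CompactSpace K] [MeasurableSpace K] [BorelSpace K]
    {M : Type*} [MetricSpace M] [CompactSpace M] [MeasurableSpace M] [BorelSpace M]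
    (Y : ℕ → X → K) (hY : ∀ t, Measurable (Y t))
    (μs : ℕ → X → M) (μlim : X → M)
    (hμs : ∀ t, Measurable (μs t)) (hμlim : Measurable μlim)
    (hconv : ∀ᵐ x ∂P, Tendsto (fun t => μs t x) atTop (𝓝 (μlim x))) :
    (∀ g : K × M → ℝ, Continuous g →
      Tendsto (fun T : ℕ =>
          (∫ z, g z ∂(cesaroOccupation P (fun t x => (Y t x, μs t x)) T)) -
            ∫ z, g z ∂(cesaroOccupation P (fun t x => (Y t x, μs (t + 1) x)) T))
        atTop (𝓝 0)) ∧
    (∀ Tn : ℕ → ℕ, StrictMono Tn → (∀ n, 0 < Tn n) →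
      ∀ νbar : Measure (K × M), IsProbabilityMeasure νbar →
        ((∀ g : K × M → ℝ, Continuous g →
            Tendsto (fun n =>
                ∫ z, g z ∂(cesaroOccupation P (fun t x => (Y t x, μs t x)) (Tn n)))
              atTop (𝓝 (∫ z, g z ∂νbar)))
          ↔
          (∀ g : K × M → ℝ, Continuous g →
            Tendsto (fun n =>
                ∫ z, g z ∂(cesaroOccupation P (fun t x => (Y t x, μs (t + 1) x)) (Tn n)))
              atTop (𝓝 (∫ z, g z ∂νbar))))) :=
  extended_occupation_same_limits_general P Y hY μs μlim hμs hconv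
end

section
/- (Proposition 'ball'.) Let d ∈ ℕ, let τ be a finite Borel measure on Euclidean space ℝ^d, and let u : ℝ^d → ℝ be τ-integrable. If ∫ u dτ < ∫ max(u, 0) dτ, then there exist x ∈ ℝ^d and r > 0 such that ∫_{Metric.ball x r} u dτ < 0; moreover x and r can be chosen so that in addition the boundary of the ball is τ-null, i.e. τ(frontier (Metric.ball x r)) = 0. -/
/-!
If `u ≥ 0` held `τ`-a.e., then `u` and `max u 0` would have the same integral; so `u < 0` on a
set of positive measure. By the Lebesgue differentiation theorem along closed balls (Besicovitch),
at a.e. such point the averages of `u` over small closed balls are negative. Only countably many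
spheres around a point carry mass, so a small radius can be chosen whose sphere is null, and then
the open and the closed ball have the same integral.
-/

open MeasureTheory Filter Metric Set Topology

theorem frequently_neg_of_integral_lt_integral_max {α : Type*} [MeasurableSpace α]
    {μ : Measure α} {u : α → ℝ} (h : ∫ y, u y ∂μ < ∫ y, max (u y) 0 ∂μ) :
    ∃ᵐ y ∂μ, u y < 0 := by
  intro hnonneg
  refine h.ne (integral_congr_ae ?_)
  filter_upwards [hnonneg] with y hy
  exact (max_eq_left (not_lt.mp hy)).symm

theorem frequently_null_frontier_ball {Ω : Type*} [PseudoMetricSpace Ω] [MeasurableSpace Ω]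
    [OpensMeasurableSpace Ω] (μ : Measure Ω) [SFinite μ] (x : Ω) :
    ∃ᶠ r in 𝓝[>] (0 : ℝ), μ (frontier (ball x r)) = 0 := by
  rw [(nhdsGT_basis (0 : ℝ)).frequently_iff]
  intro r₀ hr₀
  simpa only [thickening_singleton] using exists_null_frontier_thickening μ {x} hr₀

theorem setIntegral_ball_eq_setIntegral_closedBall {E G : Type*} [NormedAddCommGroup E]
    [NormedSpace ℝ E] [MeasurableSpace E] [NormedAddCommGroup G] [NormedSpace ℝ G]
    {μ : Measure E} {f : E → G} {x : E} {r : ℝ} (hr : r ≠ 0)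
    (h : μ (frontier (ball x r)) = 0) :
    ∫ y in ball x r, f y ∂μ = ∫ y in closedBall x r, f y ∂μ := by
  refine setIntegral_congr_set ?_
  rw [← closure_ball x hr]
  exact (closure_ae_eq_of_null_frontier h).symm

namespace Besicovitch

variable {β : Type*} [MetricSpace β] [MeasurableSpace β] [BorelSpace β]
  [SecondCountableTopology β] [HasBesicovitchCovering β] {μ : Measure β} [IsLocallyFiniteMeasure μ]

theorem ae_tendsto_average_closedBall {E : Type*} [NormedAddCommGroup E] [NormedSpace ℝ E]
    [CompleteSpace E] {f : β → E} (hf : LocallyIntegrable f μ) :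
    ∀ᵐ x ∂μ, Tendsto (fun r => ⨍ y in closedBall x r, f y ∂μ) (𝓝[>] 0) (𝓝 (f x)) := by
  filter_upwards [(Besicovitch.vitaliFamily μ).ae_tendsto_average hf] with x hx
  exact hx.comp (tendsto_filterAt μ x)

theorem exists_eventually_setIntegral_closedBall_neg {u : β → ℝ} (hu : LocallyIntegrable u μ)
    (hneg : ∃ᵐ y ∂μ, u y < 0) :
    ∃ x, ∀ᶠ r in 𝓝[>] (0 : ℝ), ∫ y in closedBall x r, u y ∂μ < 0 := by
  obtain ⟨x, hux, hx⟩ := (hneg.and_eventually (ae_tendsto_average_closedBall hu)).exists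
  refine ⟨x, (hx.eventually_lt_const hux).mono fun r hr => ?_⟩
  rw [setAverage_eq, smul_eq_mul] at hr
  exact neg_of_mul_neg_right hr (by positivity)

end Besicovitch

/-- Proposition "ball": if a `τ`-integrable function `u` on `ℝ^d` satisfies
`∫ u dτ < ∫ max(u,0) dτ` for a finite Borel measure `τ`, then some open ball has strictly
negative `u`-integral, and the ball can moreover be chosen with `τ`-null boundary. -/
theorem exists_ball_neg_integral
    (d : ℕ) (τ : Measure (EuclideanSpace ℝ (Fin d))) [IsFiniteMeasure τ]
    (u : EuclideanSpace ℝ (Fin d) → ℝ) (hu : Integrable u τ)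
    (h : (∫ y, u y ∂τ) < ∫ y, max (u y) 0 ∂τ) :
    ∃ (x : EuclideanSpace ℝ (Fin d)) (r : ℝ), 0 < r ∧
      (∫ y in Metric.ball x r, u y ∂τ) < 0 ∧
      τ (frontier (Metric.ball x r)) = 0 := by
  obtain ⟨x, hx⟩ := Besicovitch.exists_eventually_setIntegral_closedBall_neg hu.locallyIntegrable
    (frequently_neg_of_integral_lt_integral_max h)
  obtain ⟨r, ⟨hneg, hr⟩, hnull⟩ :=
    ((hx.and self_mem_nhdsWithin).and_frequently (frequently_null_frontier_ball τ x)).exists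
  refine ⟨x, r, hr, ?_, hnull⟩
  rwa [setIntegral_ball_eq_setIntegral_closedBall hr.ne' hnull]
end

section
/- (Bayesian posterior consistency; the core of the lemma that the agent adequately learns the calibrated information structure.) Almost surely, for every s ∈ S, the posterior probability π_N(s) converges as N → ∞ to π(s) / (Σ_{s' ∈ C} π(s')) if s ∈ C, and to 0 if s ∉ C, where C := { s ∈ S : p s a = p s⋆ a for every a ∈ A } is the set of states observationally equivalent to the true state s⋆. -/
/-!
Dividing by the true likelihood `∏ p sStar (X n)`, almost surely positive, turns the posterior
into `π s * L s N / ∑ s', π s' * L s' N` with `L s N = ∏ n, p s (X n) / p sStar (X n)`.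
If `s` is equivalent to `sStar` then `L s N = 1`. Otherwise the Bhattacharyya coefficient
`∑ a, √(p s a * p sStar a)` is `< 1`; this yields `g` with `p s a / p sStar a ≤ exp (g a)` and
`∑ a, p sStar a * g a < 0`, so by the strong law `∑ n ≤ N, g (X n) → -∞` and `L s N → 0`.
-/

open MeasureTheory Filter Topology Finset ProbabilityTheory

lemma Real.sqrt_mul_le_add_div_two {x y : ℝ} (hx : 0 ≤ x) (hy : 0 ≤ y) :
    √(x * y) ≤ (x + y) / 2 := by
  rw [Real.sqrt_le_left (by positivity)]
  nlinarith [sq_nonneg (x - y)]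

lemma Real.sqrt_mul_lt_add_div_two {x y : ℝ} (hx : 0 ≤ x) (hy : 0 ≤ y) (hxy : x ≠ y) :
    √(x * y) < (x + y) / 2 := by
  have hne : √x - √y ≠ 0 := fun h ↦ hxy <| by
    rw [← Real.sq_sqrt hx, ← Real.sq_sqrt hy, sub_eq_zero.mp h]
  have : 0 < (√x - √y) ^ 2 := by positivity
  rw [Real.sqrt_mul hx]
  nlinarith [Real.sq_sqrt hx, Real.sq_sqrt hy]

lemma sum_sqrt_mul_lt_one {ι : Type*} [Fintype ι] {q r : ι → ℝ} (hq : ∀ i, 0 ≤ q i)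
    (hr : ∀ i, 0 ≤ r i) (hq1 : ∑ i, q i = 1) (hr1 : ∑ i, r i = 1) (hqr : q ≠ r) :
    ∑ i, √(r i * q i) < 1 := by
  obtain ⟨i₀, hi₀⟩ := Function.ne_iff.mp hqr
  calc ∑ i, √(r i * q i)
      < ∑ i, (r i + q i) / 2 :=
        sum_lt_sum (fun i _ ↦ Real.sqrt_mul_le_add_div_two (hr i) (hq i))
          ⟨i₀, mem_univ _, Real.sqrt_mul_lt_add_div_two (hr i₀) (hq i₀) (Ne.symm hi₀)⟩
    _ = 1 := by rw [← sum_div, sum_add_distrib, hq1, hr1]; norm_num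

lemma mul_log_div_add_sq_le {q r t : ℝ} (hq : 0 ≤ q) (hr : 0 ≤ r) (ht : 0 < t) :
    q * Real.log (r / q + t ^ 2) ≤ 2 * (√(r * q) + t * q - q) := by
  rcases hq.eq_or_lt with rfl | hq
  · simp
  have hlog : Real.log (r / q + t ^ 2) ≤ 2 * (√(r / q) + t - 1) :=
    calc Real.log (r / q + t ^ 2)
        ≤ Real.log ((√(r / q) + t) ^ 2) := by
          gcongr
          nlinarith [Real.sq_sqrt (div_nonneg hr hq.le), Real.sqrt_nonneg (r / q)]
      _ = 2 * Real.log (√(r / q) + t) := by rw [Real.log_pow]; norm_num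
      _ ≤ 2 * (√(r / q) + t - 1) := by gcongr; exact Real.log_le_sub_one_of_pos (by positivity)
  have hsqrt : √(r / q) * q = √(r * q) := by
    rw [show r * q = r / q * q ^ 2 by field_simp, Real.sqrt_mul (div_nonneg hr hq.le),
      Real.sqrt_sq hq.le]
  calc q * Real.log (r / q + t ^ 2) ≤ q * (2 * (√(r / q) + t - 1)) := by gcongr
    _ = 2 * (√(r * q) + t * q - q) := by rw [← hsqrt]; ring

/-- The choice `g = log (r / q + t ^ 2)` with `t = (1 - ρ) / 2`, `ρ` the Bhattacharyya coefficient,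
works; the shift by `t ^ 2` keeps `g` finite where `r` vanishes. -/
lemma exists_div_le_exp_and_sum_mul_neg {ι : Type*} [Fintype ι] {q r : ι → ℝ}
    (hq : ∀ i, 0 ≤ q i) (hr : ∀ i, 0 ≤ r i) (hq1 : ∑ i, q i = 1) (hr1 : ∑ i, r i = 1)
    (hqr : q ≠ r) :
    ∃ g : ι → ℝ, (∀ i, r i / q i ≤ Real.exp (g i)) ∧ ∑ i, q i * g i < 0 := by
  set ρ := ∑ i, √(r i * q i)
  have hρ : ρ < 1 := sum_sqrt_mul_lt_one hq hr hq1 hr1 hqr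
  set t := (1 - ρ) / 2
  have ht : 0 < t := by simp only [t]; linarith
  refine ⟨fun i ↦ Real.log (r i / q i + t ^ 2), fun i ↦ ?_, ?_⟩
  · have : 0 ≤ r i / q i := div_nonneg (hr i) (hq i)
    rw [Real.exp_log (by positivity)]
    linarith [sq_nonneg t]
  · calc ∑ i, q i * Real.log (r i / q i + t ^ 2)
        ≤ ∑ i, 2 * (√(r i * q i) + t * q i - q i) :=
          sum_le_sum fun i _ ↦ mul_log_div_add_sq_le (hq i) (hr i) ht
      _ = 2 * (ρ + t * ∑ i, q i - ∑ i, q i) := by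
          rw [← mul_sum, sum_sub_distrib, sum_add_distrib, mul_sum]
      _ < 0 := by rw [hq1]; simp only [t]; linarith

lemma Filter.Tendsto.div_sum_of_mul {α ι : Type*} [Fintype ι] {l : Filter α}
    {w : ι → α → ℝ} {c : ι → ℝ} (hw : ∀ i, Tendsto (w i) l (𝓝 (c i))) (hc : ∑ i, c i ≠ 0)
    {Z : α → ℝ} (hZ : ∀ x, Z x ≠ 0) (i : ι) :
    Tendsto (fun x ↦ w i x * Z x / ∑ j, w j x * Z x) l (𝓝 (c i / ∑ j, c j)) := by
  simp_rw [← sum_mul, mul_div_mul_right _ _ (hZ _)]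
  exact (hw i).div (tendsto_finsetSum _ fun j _ ↦ hw j) hc

section IIDFinite

variable {Ω A : Type*} [MeasurableSpace Ω] {P : Measure Ω} [Fintype A] [MeasurableSpace A]
  [MeasurableSingletonClass A] {X : ℕ → Ω → A} {q : A → ℝ}

lemma ae_forall_pos_of_measure_eq (hX : ∀ n, Measurable (X n))
    (hdist : ∀ n a, P {ω | X n ω = a} = ENNReal.ofReal (q a)) :
    ∀ᵐ ω ∂P, ∀ n, 0 < q (X n ω) := by
  refine ae_all_iff.2 fun n ↦ ae_of_ae_map (p := fun a ↦ 0 < q a) (hX n).aemeasurable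
    (ae_iff_of_countable.2 fun a ha ↦ ?_)
  rw [Measure.map_apply (hX n) (measurableSet_singleton a)] at ha
  exact ENNReal.ofReal_pos.1 (pos_iff_ne_zero.2 (hdist n a ▸ ha))

lemma identDistrib_of_measure_eq (hX : ∀ n, Measurable (X n))
    (hdist : ∀ n a, P {ω | X n ω = a} = ENNReal.ofReal (q a)) (m n : ℕ) :
    IdentDistrib (X m) (X n) P P where
  aemeasurable_fst := (hX m).aemeasurable
  aemeasurable_snd := (hX n).aemeasurable
  map_eq := Measure.ext_of_singleton fun a ↦ by
    rw [Measure.map_apply (hX m) (measurableSet_singleton a),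
      Measure.map_apply (hX n) (measurableSet_singleton a)]
    exact (hdist m a).trans (hdist n a).symm

lemma integral_comp_eq_sum_of_measure_eq [IsFiniteMeasure P] (hX : ∀ n, Measurable (X n))
    (hq : ∀ a, 0 ≤ q a) (hdist : ∀ n a, P {ω | X n ω = a} = ENNReal.ofReal (q a))
    (n : ℕ) (g : A → ℝ) :
    ∫ ω, g (X n ω) ∂P = ∑ a, q a * g a := by
  rw [← integral_map (hX n).aemeasurable (measurable_of_finite g).aestronglyMeasurable,
    integral_fintype Integrable.of_finite]
  refine sum_congr rfl fun a _ ↦ ?_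
  rw [measureReal_def, Measure.map_apply (hX n) (measurableSet_singleton a)]
  simp only [Set.preimage, Set.mem_singleton_iff, hdist, ENNReal.toReal_ofReal (hq a), smul_eq_mul]

lemma ae_tendsto_sum_comp_atBot [IsFiniteMeasure P] (hX : ∀ n, Measurable (X n))
    (hindep : iIndepFun X P) (hq : ∀ a, 0 ≤ q a)
    (hdist : ∀ n a, P {ω | X n ω = a} = ENNReal.ofReal (q a))
    {g : A → ℝ} (hg : ∑ a, q a * g a < 0) :
    ∀ᵐ ω ∂P, Tendsto (fun N ↦ ∑ n ∈ Icc 1 N, g (X n ω)) atTop atBot := by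
  have hgm : Measurable g := measurable_of_finite g
  have hslln := strong_law_ae_real (fun i ω ↦ g (X (i + 1) ω))
    (Integrable.of_finite.comp_measurable (hX 1))
    (fun i j hij ↦ (hindep.indepFun (by omega : i + 1 ≠ j + 1)).comp hgm hgm)
    (fun i ↦ (identDistrib_of_measure_eq hX hdist (i + 1) 1).comp hgm)
  rw [integral_comp_eq_sum_of_measure_eq hX hq hdist] at hslln
  filter_upwards [hslln] with ω hω
  refine (tendsto_natCast_atTop_atTop.atTop_mul_neg hg hω).congr' ?_
  filter_upwards [eventually_ne_atTop 0] with N hN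
  rw [mul_div_cancel₀ _ (Nat.cast_ne_zero.2 hN), range_eq_Ico, sum_Ico_add' (fun n ↦ g (X n ω))]
  rfl

lemma ae_tendsto_prod_div_zero [IsFiniteMeasure P] (hX : ∀ n, Measurable (X n))
    (hindep : iIndepFun X P) (hdist : ∀ n a, P {ω | X n ω = a} = ENNReal.ofReal (q a))
    {r : A → ℝ} (hq : ∀ a, 0 ≤ q a) (hr : ∀ a, 0 ≤ r a) (hq1 : ∑ a, q a = 1)
    (hr1 : ∑ a, r a = 1) (hrq : r ≠ q) :
    ∀ᵐ ω ∂P, Tendsto (fun N ↦ ∏ n ∈ Icc 1 N, r (X n ω) / q (X n ω)) atTop (𝓝 0) := by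
  obtain ⟨g, hrg, hg⟩ := exists_div_le_exp_and_sum_mul_neg hq hr hq1 hr1 hrq.symm
  filter_upwards [ae_tendsto_sum_comp_atBot hX hindep hq hdist hg] with ω hω
  refine squeeze_zero (fun N ↦ prod_nonneg fun n _ ↦ div_nonneg (hr _) (hq _)) (fun N ↦ ?_)
    (Real.tendsto_exp_atBot.comp hω)
  calc ∏ n ∈ Icc 1 N, r (X n ω) / q (X n ω)
      ≤ ∏ n ∈ Icc 1 N, Real.exp (g (X n ω)) :=
        prod_le_prod (fun n _ ↦ div_nonneg (hr _) (hq _)) fun n _ ↦ hrg _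
    _ = Real.exp (∑ n ∈ Icc 1 N, g (X n ω)) := (Real.exp_sum _ _).symm

end IIDFinite

theorem bayesian_posterior_consistency_general
    {S A : Type} [Fintype S] [Fintype A]
    [MeasurableSpace A] [MeasurableSingletonClass A]
    (p : S → A → ℝ) (hp : ∀ s a, 0 ≤ p s a) (hpsum : ∀ s, ∑ a, p s a = 1)
    (π : S → ℝ) (hπ : ∀ s, 0 ≤ π s)
    (sStar : S) (hsStar : 0 < π sStar)
    {X : Type*} [MeasurableSpace X] (P : Measure X) [IsProbabilityMeasure P]
    (Xseq : ℕ → X → A) (hmeas : ∀ n, Measurable (Xseq n))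
    (hindep : ProbabilityTheory.iIndepFun Xseq P)
    (hdist : ∀ n a, P {x | Xseq n x = a} = ENNReal.ofReal (p sStar a)) :
    ∀ᵐ x ∂P, ∀ s : S,
      Tendsto (fun N : ℕ =>
          (π s * ∏ n ∈ Finset.Icc 1 N, p s (Xseq n x)) /
            ∑ s', π s' * ∏ n ∈ Finset.Icc 1 N, p s' (Xseq n x))
        atTop
        (𝓝 (if ∀ a, p s a = p sStar a
            then π s / ∑ s', (if ∀ a, p s' a = p sStar a then π s' else 0)
            else 0)) := by
  have hpos := ae_forall_pos_of_measure_eq hmeas hdist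
  have hratio : ∀ᵐ x ∂P, ∀ s,
      Tendsto (fun N ↦ ∏ n ∈ Icc 1 N, p s (Xseq n x) / p sStar (Xseq n x)) atTop
        (𝓝 (if ∀ a, p s a = p sStar a then 1 else 0)) := by
    refine ae_all_iff.2 fun s ↦ ?_
    by_cases hs : ∀ a, p s a = p sStar a
    · filter_upwards [hpos] with x hx
      simp only [hs, div_self (hx _).ne', prod_const_one, implies_true, if_true]
      exact tendsto_const_nhds
    · filter_upwards [ae_tendsto_prod_div_zero hmeas hindep hdist (hp sStar) (hp s) (hpsum sStar)
        (hpsum s) (fun h ↦ hs (congrFun h))] with x hx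
      simpa only [hs, if_false] using hx
  filter_upwards [hpos, hratio] with x hx hratio s
  have hw : ∀ s, Tendsto (fun N ↦ π s * ∏ n ∈ Icc 1 N, p s (Xseq n x) / p sStar (Xseq n x))
      atTop (𝓝 (if ∀ a, p s a = p sStar a then π s else 0)) := fun s ↦ by
    simpa only [mul_ite, mul_one, mul_zero] using (hratio s).const_mul (π s)
  have hC : 0 < ∑ s', (if ∀ a, p s' a = p sStar a then π s' else 0) :=
    hsStar.trans_le <| by
      simpa using single_le_sum (fun s' _ ↦ ite_nonneg (hπ s') le_rfl) (mem_univ sStar)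
        (f := fun s' ↦ if ∀ a, p s' a = p sStar a then π s' else 0)
  have hZ : ∀ N, ∏ n ∈ Icc 1 N, p sStar (Xseq n x) ≠ 0 := fun N ↦
    (prod_pos fun n _ ↦ hx n).ne'
  have hlim := Filter.Tendsto.div_sum_of_mul hw hC.ne' hZ s
  simp only [mul_assoc, prod_div_distrib, div_mul_cancel₀ _ (hZ _)] at hlim
  rwa [ite_div, zero_div] at hlim

/-- Bayesian posterior consistency: with i.i.d. observations drawn from `p sStar`, the posterior
probability of each state `s` converges almost surely to the prior conditioned on the set
`C = {s | ∀ a, p s a = p sStar a}` of states observationally equivalent to the true state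
(and to `0` for states outside `C`). -/
theorem bayesian_posterior_consistency
    {S A : Type} [Fintype S] [Fintype A] [Nonempty S] [Nonempty A]
    [MeasurableSpace A] [MeasurableSingletonClass A]
    (p : S → A → ℝ) (hp : ∀ s a, 0 ≤ p s a) (hpsum : ∀ s, ∑ a, p s a = 1)
    (π : S → ℝ) (hπ : ∀ s, 0 ≤ π s) (hπsum : ∑ s, π s = 1)
    (sStar : S) (hsStar : 0 < π sStar)
    {X : Type*} [MeasurableSpace X] (P : Measure X) [IsProbabilityMeasure P]
    (Xseq : ℕ → X → A) (hmeas : ∀ n, Measurable (Xseq n))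
    (hindep : ProbabilityTheory.iIndepFun Xseq P)
    (hdist : ∀ n a, P {x | Xseq n x = a} = ENNReal.ofReal (p sStar a)) :
    ∀ᵐ x ∂P, ∀ s : S,
      Tendsto (fun N : ℕ =>
          (π s * ∏ n ∈ Finset.Icc 1 N, p s (Xseq n x)) /
            ∑ s', π s' * ∏ n ∈ Finset.Icc 1 N, p s' (Xseq n x))
        atTop
        (𝓝 (if ∀ a, p s a = p sStar a
            then π s / ∑ s', (if ∀ a, p s' a = p sStar a then π s' else 0)
            else 0)) :=
  bayesian_posterior_consistency_general p hp hpsum π hπ sStar hsStar P Xseq hmeas hindep hdist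
end

section
/- (Proposition on state-dependent type ranking / concavification of a piecewise-convex value function.) Let c ∈ (0,1) and let W : [0,1] → ℝ be continuous, convex on [0,c] and convex on [c,1]. For x ∈ [0,1] define V(x) as the supremum of ∫ W dτ over Borel probability measures τ on [0,1] with mean ∫ t dτ(t) = x. Then: (i) if (1−c)·W(0) + c·W(1) ≥ W(c) (full transparency is optimal), V(x) = (1−x)·W(0) + x·W(1) for every x ∈ [0,1]; (ii) if (1−c)·W(0) + c·W(1) < W(c), then V(x) = ((c−x)·W(0) + x·W(c))/c for x ∈ [0,c] (split between 0 and c) and V(x) = ((1−x)·W(c) + (x−c)·W(1))/(1−c) for x ∈ [c,1] (split between c and 1). In particular, if W(c) > max(W(0), W(1)) then case (ii) applies and V(x) > (1−x)·W(0) + x·W(1) for every x ∈ (0,1), so full transparency is not optimal. -/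
/-!
By Jensen's inequality, `∫ W dτ ≤ g x` for every admissible `τ` of mean `x` and every continuous
concave `g` dominating `W` on `[0,1]`; and if `g x` equals the chord of `W` between two points
`p ≤ x ≤ q`, the two-point law on `{p, q}` with mean `x` attains it. So `V x` is that chord value.
Convexity on `[0,c]` and `[c,1]` puts `W` below any concave function dominating it at `0`, `c`
and `1`. If `W c` lies below the chord from `0` to `1`, that chord is the majorant; otherwise the
minimum of the chords over `[0,c]` and `[c,1]` is.
-/

open MeasureTheory

/-- The concavified value `V x`: the supremum of `∫ W dτ` over Borel probability measures `τ`
supported on `[0,1]` with mean `x`. -/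
noncomputable def concavifiedValue (W : ℝ → ℝ) (x : ℝ) : ℝ :=
  sSup {v : ℝ | ∃ τ : Measure ℝ, IsProbabilityMeasure τ ∧ τ (Set.Icc 0 1) = 1 ∧
    (∫ t, t ∂τ) = x ∧ v = ∫ t in Set.Icc (0 : ℝ) 1, W t ∂τ}

open Set

noncomputable def chord (u v y₁ y₂ t : ℝ) : ℝ := ((v - t) * y₁ + (t - u) * y₂) / (v - u)

theorem concaveOn_chord {s : Set ℝ} (hs : Convex ℝ s) (u v y₁ y₂ : ℝ) :
    ConcaveOn ℝ s (chord u v y₁ y₂) := by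
  refine ⟨hs, fun x _ y _ a b _ _ hab => le_of_eq ?_⟩
  simp only [chord, smul_eq_mul, div_eq_mul_inv]
  linear_combination (v * y₁ - u * y₂) * (v - u)⁻¹ * hab

theorem continuous_chord (u v y₁ y₂ : ℝ) : Continuous (chord u v y₁ y₂) := by
  unfold chord
  fun_prop

theorem chord_left (u v y₁ y₂ : ℝ) (huv : u ≠ v) : chord u v y₁ y₂ u = y₁ := by
  rw [chord, sub_self, zero_mul, add_zero, mul_div_cancel_left₀ _ (sub_ne_zero.2 huv.symm)]

theorem chord_right (u v y₁ y₂ : ℝ) (huv : u ≠ v) : chord u v y₁ y₂ v = y₂ := by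
  rw [chord, sub_self, zero_mul, zero_add, mul_div_cancel_left₀ _ (sub_ne_zero.2 huv.symm)]

theorem ConvexOn.le_of_concaveOn_of_mem_segment {E : Type*} [AddCommGroup E] [Module ℝ E]
    {s : Set E} {f g : E → ℝ} (hf : ConvexOn ℝ s f) (hg : ConcaveOn ℝ s g) {x y z : E}
    (hx : x ∈ s) (hy : y ∈ s) (hfgx : f x ≤ g x) (hfgy : f y ≤ g y) (hz : z ∈ segment ℝ x y) :
    f z ≤ g z := by
  have := (hf.sub hg).le_on_segment hx hy hz
  simp only [Pi.sub_apply, le_max_iff] at this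
  rcases this with h | h <;> linarith

theorem le_of_convexOn_Icc_of_concaveOn {f g : ℝ → ℝ} {a b c : ℝ} (hac : a ≤ c) (hcb : c ≤ b)
    (hf₁ : ConvexOn ℝ (Icc a c) f) (hf₂ : ConvexOn ℝ (Icc c b) f) (hg : ConcaveOn ℝ (Icc a b) g)
    (ha : f a ≤ g a) (hc : f c ≤ g c) (hb : f b ≤ g b) {t : ℝ} (ht : t ∈ Icc a b) :
    f t ≤ g t := by
  rcases le_total t c with htc | hct
  · refine hf₁.le_of_concaveOn_of_mem_segment
      (hg.subset (Icc_subset_Icc_right hcb) (convex_Icc a c))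
      (left_mem_Icc.2 hac) (right_mem_Icc.2 hac) ha hc ?_
    rw [segment_eq_Icc hac]
    exact ⟨ht.1, htc⟩
  · refine hf₂.le_of_concaveOn_of_mem_segment
      (hg.subset (Icc_subset_Icc_left hac) (convex_Icc c b))
      (left_mem_Icc.2 hcb) (right_mem_Icc.2 hcb) hc hb ?_
    rw [segment_eq_Icc hcb]
    exact ⟨hct, ht.2⟩

theorem restrict_eq_self_of_measure_eq_one {τ : Measure ℝ} [IsProbabilityMeasure τ] {s : Set ℝ}
    (hs : MeasurableSet s) (hτ : τ s = 1) : τ.restrict s = τ :=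
  Measure.restrict_eq_self_of_ae_mem <|
    (ae_mem_iff_measure_eq hs.nullMeasurableSet).2 (by rw [hτ, measure_univ])

theorem setIntegral_le_of_le_concaveOn {s : Set ℝ} (hs : IsCompact s) {W g : ℝ → ℝ}
    (hW : ContinuousOn W s) (hg : ConcaveOn ℝ s g) (hgc : ContinuousOn g s)
    (hWg : ∀ t ∈ s, W t ≤ g t) {τ : Measure ℝ} [IsProbabilityMeasure τ] (hτ : τ s = 1) :
    ∫ t in s, W t ∂τ ≤ g (∫ t, t ∂τ) := by
  have hres := restrict_eq_self_of_measure_eq_one hs.measurableSet hτ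
  have hae : ∀ᵐ t ∂τ, t ∈ s := hres ▸ ae_restrict_mem hs.measurableSet
  have integrable {f : ℝ → ℝ} (hf : ContinuousOn f s) : Integrable f τ := by
    simpa only [IntegrableOn, hres] using hf.integrableOn_compact (μ := τ) hs
  rw [hres]
  calc ∫ t, W t ∂τ ≤ ∫ t, g t ∂τ := integral_mono_ae (integrable hW) (integrable hgc) (hae.mono hWg)
    _ ≤ g (∫ t, t ∂τ) :=
      hg.le_map_integral hgc hs.isClosed hae (integrable continuousOn_id) (integrable hgc)

noncomputable def twoPointMeasure (a b p q : ℝ) : Measure ℝ :=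
  ENNReal.ofReal a • Measure.dirac p + ENNReal.ofReal b • Measure.dirac q

theorem twoPointMeasure_apply_of_mem {a b : ℝ} (ha : 0 ≤ a) (hb : 0 ≤ b) (hab : a + b = 1)
    {p q : ℝ} {s : Set ℝ} (hp : p ∈ s) (hq : q ∈ s) : twoPointMeasure a b p q s = 1 := by
  simp only [twoPointMeasure, Measure.add_apply, Measure.smul_apply, smul_eq_mul,
    Measure.dirac_apply_of_mem hp, Measure.dirac_apply_of_mem hq, mul_one]
  rw [← ENNReal.ofReal_add ha hb, hab, ENNReal.ofReal_one]

theorem isProbabilityMeasure_twoPointMeasure {a b : ℝ} (ha : 0 ≤ a) (hb : 0 ≤ b)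
    (hab : a + b = 1) (p q : ℝ) : IsProbabilityMeasure (twoPointMeasure a b p q) :=
  ⟨twoPointMeasure_apply_of_mem ha hb hab (mem_univ p) (mem_univ q)⟩

theorem integral_twoPointMeasure {a b : ℝ} (ha : 0 ≤ a) (hb : 0 ≤ b) (f : ℝ → ℝ) (p q : ℝ) :
    ∫ t, f t ∂twoPointMeasure a b p q = a * f p + b * f q := by
  have integrable (r : ℝ) : Integrable f (Measure.dirac r) := integrable_dirac enorm_lt_top
  rw [twoPointMeasure, integral_add_measure ((integrable p).smul_measure ENNReal.ofReal_ne_top)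
      ((integrable q).smul_measure ENNReal.ofReal_ne_top), integral_smul_measure,
    integral_smul_measure, integral_dirac, integral_dirac, ENNReal.toReal_ofReal ha,
    ENNReal.toReal_ofReal hb, smul_eq_mul, smul_eq_mul]

theorem concavifiedValue_eq_chord {W g : ℝ → ℝ} (hW : ContinuousOn W (Icc 0 1))
    (hg : ConcaveOn ℝ (Icc 0 1) g) (hgc : ContinuousOn g (Icc 0 1))
    (hWg : ∀ t ∈ Icc (0 : ℝ) 1, W t ≤ g t) {p q x : ℝ} (hp : 0 ≤ p) (hpq : p < q) (hq : q ≤ 1)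
    (hx : x ∈ Icc p q) (hgx : g x ≤ chord p q (W p) (W q) x) :
    concavifiedValue W x = chord p q (W p) (W q) x := by
  refine IsGreatest.csSup_eq ⟨?_, ?_⟩
  · have hqp : q - p ≠ 0 := (sub_pos.2 hpq).ne'
    have ha : 0 ≤ (q - x) / (q - p) := div_nonneg (by linarith [hx.2]) (by linarith)
    have hb : 0 ≤ (x - p) / (q - p) := div_nonneg (by linarith [hx.1]) (by linarith)
    have hab : (q - x) / (q - p) + (x - p) / (q - p) = 1 := by field_simp; ring
    have := isProbabilityMeasure_twoPointMeasure ha hb hab p q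
    have hτ : twoPointMeasure _ _ p q (Icc 0 1) = 1 :=
      twoPointMeasure_apply_of_mem ha hb hab ⟨hp, by linarith⟩ ⟨by linarith, hq⟩
    refine ⟨_, this, hτ, ?_, ?_⟩
    · rw [integral_twoPointMeasure ha hb]
      field_simp
      ring
    · rw [restrict_eq_self_of_measure_eq_one measurableSet_Icc hτ,
        integral_twoPointMeasure ha hb, chord]
      field_simp
  · rintro v ⟨τ, _, hτ, rfl, rfl⟩
    exact (setIntegral_le_of_le_concaveOn isCompact_Icc hW hg hgc hWg hτ).trans hgx

theorem concavifiedValue_eq_of_le_chord {c : ℝ} (hc : c ∈ Ioo (0 : ℝ) 1) {W : ℝ → ℝ}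
    (hW : ContinuousOn W (Icc 0 1)) (hW₁ : ConvexOn ℝ (Icc 0 c) W)
    (hW₂ : ConvexOn ℝ (Icc c 1) W) (h : W c ≤ (1 - c) * W 0 + c * W 1) {x : ℝ}
    (hx : x ∈ Icc (0 : ℝ) 1) : concavifiedValue W x = (1 - x) * W 0 + x * W 1 := by
  have hchord (t : ℝ) : chord 0 1 (W 0) (W 1) t = (1 - t) * W 0 + t * W 1 := by simp [chord]
  have hg := concaveOn_chord (convex_Icc 0 1) 0 1 (W 0) (W 1)
  have hWg (t : ℝ) (ht : t ∈ Icc (0 : ℝ) 1) : W t ≤ chord 0 1 (W 0) (W 1) t :=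
    le_of_convexOn_Icc_of_concaveOn hc.1.le hc.2.le hW₁ hW₂ hg (by simp [hchord])
      (by rw [hchord]; exact h) (by simp [hchord]) ht
  rw [← hchord]
  exact concavifiedValue_eq_chord hW hg (continuous_chord ..).continuousOn hWg le_rfl
    zero_lt_one le_rfl hx le_rfl

section InfChord

variable {c : ℝ} {W : ℝ → ℝ}

theorem concaveOn_inf_chord :
    ConcaveOn ℝ (Icc 0 1) (chord 0 c (W 0) (W c) ⊓ chord c 1 (W c) (W 1)) :=
  (concaveOn_chord (convex_Icc 0 1) ..).inf (concaveOn_chord (convex_Icc 0 1) ..)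

theorem continuousOn_inf_chord :
    ContinuousOn (chord 0 c (W 0) (W c) ⊓ chord c 1 (W c) (W 1)) (Icc 0 1) :=
  ((continuous_chord ..).min (continuous_chord ..)).continuousOn

theorem le_inf_chord_of_chord_lt (hc : c ∈ Ioo (0 : ℝ) 1) (hW₁ : ConvexOn ℝ (Icc 0 c) W)
    (hW₂ : ConvexOn ℝ (Icc c 1) W) (h : (1 - c) * W 0 + c * W 1 < W c) {t : ℝ}
    (ht : t ∈ Icc (0 : ℝ) 1) : W t ≤ (chord 0 c (W 0) (W c) ⊓ chord c 1 (W c) (W 1)) t := by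
  obtain ⟨hc0, hc1⟩ := hc
  refine le_of_convexOn_Icc_of_concaveOn hc0.le hc1.le hW₁ hW₂ concaveOn_inf_chord
    ?_ ?_ ?_ ht <;> simp only [Pi.inf_apply, le_inf_iff]
  · refine ⟨(chord_left _ _ _ _ hc0.ne).ge, ?_⟩
    rw [chord, le_div_iff₀ (by linarith)]
    linarith
  · exact ⟨(chord_right _ _ _ _ hc0.ne).ge, (chord_left _ _ _ _ hc1.ne).ge⟩
  · refine ⟨?_, (chord_right _ _ _ _ hc1.ne).ge⟩
    rw [chord, le_div_iff₀ (by linarith)]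
    linarith

theorem concavifiedValue_eq_of_chord_lt_of_le (hc : c ∈ Ioo (0 : ℝ) 1)
    (hW : ContinuousOn W (Icc 0 1)) (hW₁ : ConvexOn ℝ (Icc 0 c) W)
    (hW₂ : ConvexOn ℝ (Icc c 1) W) (h : (1 - c) * W 0 + c * W 1 < W c) {x : ℝ}
    (hx : x ∈ Icc 0 c) : concavifiedValue W x = ((c - x) * W 0 + x * W c) / c := by
  simpa [chord] using concavifiedValue_eq_chord hW concaveOn_inf_chord continuousOn_inf_chord
    (fun _ ↦ le_inf_chord_of_chord_lt hc hW₁ hW₂ h) le_rfl hc.1 hc.2.le hx inf_le_left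

theorem concavifiedValue_eq_of_chord_lt_of_ge (hc : c ∈ Ioo (0 : ℝ) 1)
    (hW : ContinuousOn W (Icc 0 1)) (hW₁ : ConvexOn ℝ (Icc 0 c) W)
    (hW₂ : ConvexOn ℝ (Icc c 1) W) (h : (1 - c) * W 0 + c * W 1 < W c) {x : ℝ}
    (hx : x ∈ Icc c 1) :
    concavifiedValue W x = ((1 - x) * W c + (x - c) * W 1) / (1 - c) := by
  simpa [chord] using concavifiedValue_eq_chord hW concaveOn_inf_chord continuousOn_inf_chord
    (fun _ ↦ le_inf_chord_of_chord_lt hc hW₁ hW₂ h) hc.1.le hc.2 le_rfl hx inf_le_right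

theorem lt_concavifiedValue_of_max_lt (hc : c ∈ Ioo (0 : ℝ) 1)
    (hW : ContinuousOn W (Icc 0 1)) (hW₁ : ConvexOn ℝ (Icc 0 c) W)
    (hW₂ : ConvexOn ℝ (Icc c 1) W) (h : max (W 0) (W 1) < W c) {x : ℝ}
    (hx : x ∈ Ioo (0 : ℝ) 1) : (1 - x) * W 0 + x * W 1 < concavifiedValue W x := by
  obtain ⟨hc0, hc1⟩ := hc
  obtain ⟨h0, h1⟩ := max_lt_iff.1 h
  have hgap : (1 - c) * W 0 + c * W 1 < W c := by nlinarith
  rcases le_total x c with hxc | hcx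
  · rw [concavifiedValue_eq_of_chord_lt_of_le ⟨hc0, hc1⟩ hW hW₁ hW₂ hgap ⟨hx.1.le, hxc⟩,
      lt_div_iff₀ hc0]
    nlinarith [mul_lt_mul_of_pos_left hgap hx.1]
  · rw [concavifiedValue_eq_of_chord_lt_of_ge ⟨hc0, hc1⟩ hW hW₁ hW₂ hgap ⟨hcx, hx.2.le⟩,
      lt_div_iff₀ (by linarith)]
    nlinarith [mul_lt_mul_of_pos_left hgap (sub_pos.2 hx.2)]

end InfChord

/-- Proposition on state-dependent type ranking: concavification of a continuous value function
that is convex on `[0,c]` and on `[c,1]`. If `(1-c)·W 0 + c·W 1 ≥ W c`, full transparency is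
optimal; otherwise the optimal split is between `0` and `c` (resp. `c` and `1`). In particular,
if `W c > max (W 0) (W 1)` then full transparency is not optimal. -/
theorem concavification_piecewise_convex
    (c : ℝ) (hc : c ∈ Set.Ioo (0 : ℝ) 1)
    (W : ℝ → ℝ) (hWcont : ContinuousOn W (Set.Icc 0 1))
    (hWconv₁ : ConvexOn ℝ (Set.Icc 0 c) W)
    (hWconv₂ : ConvexOn ℝ (Set.Icc c 1) W) :
    ((1 - c) * W 0 + c * W 1 ≥ W c →
      ∀ x ∈ Set.Icc (0 : ℝ) 1, concavifiedValue W x = (1 - x) * W 0 + x * W 1) ∧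
    ((1 - c) * W 0 + c * W 1 < W c →
      (∀ x ∈ Set.Icc (0 : ℝ) c,
        concavifiedValue W x = ((c - x) * W 0 + x * W c) / c) ∧
      (∀ x ∈ Set.Icc c (1 : ℝ),
        concavifiedValue W x = ((1 - x) * W c + (x - c) * W 1) / (1 - c))) ∧
    (W c > max (W 0) (W 1) →
      ∀ x ∈ Set.Ioo (0 : ℝ) 1, concavifiedValue W x > (1 - x) * W 0 + x * W 1) :=
  ⟨fun h _ ↦ concavifiedValue_eq_of_le_chord hc hWcont hWconv₁ hWconv₂ h,
    fun h ↦ ⟨fun _ ↦ concavifiedValue_eq_of_chord_lt_of_le hc hWcont hWconv₁ hWconv₂ h,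
      fun _ ↦ concavifiedValue_eq_of_chord_lt_of_ge hc hWcont hWconv₁ hWconv₂ h⟩,
    fun h _ ↦ lt_concavifiedValue_of_max_lt hc hWcont hWconv₁ hWconv₂ h⟩
end

section
/- (Undetectable deviations are undetectable: in a dynamic direct mechanism, a reporting strategy whose report distribution aggregates to the type distribution after every reported history induces the same joint distribution over the state and the report–allocation history as truthtelling; the key step in the necessity proof of Theorem 3.) Suppose the reporting strategy σ is undetectable, i.e. for every period t ∈ {1,…,T}, every reported history ĥ ∈ (Θ × A)^{t−1}, and every θ' ∈ Θ: Σ_θ f(θ) · σ_t(ĥ, θ, θ') = f(θ'). Then for every state ω ∈ Ω and every report–allocation path (θ'_1, a_1, …, θ'_T, a_T) ∈ (Θ × A)^T: Σ over all true-type paths (θ_1, …, θ_T) ∈ Θ^T of P_σ(ω, (θ_t, θ'_t, a_t)_{t=1}^{T}) equals μ0(ω) · ∏_{t=1}^{T} f(θ'_t) · φ_t(ω, ĥ_t, θ'_t, a_t), where ĥ_t := ((θ'_1, a_1), …, (θ'_{t−1}, a_{t−1})); in other words, the marginal of P_σ over states and report–allocation paths coincides with the path distribution under truthful reporting. -/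
open Finset

/-- The reported history before period `t`: the reports and allocations of periods `< t`. -/
def reportedHistory {Θ A : Type} {T : ℕ} (rep : Fin T → Θ) (alloc : Fin T → A)
    (t : Fin T) : Fin t → Θ × A :=
  fun s => (rep (Fin.castLE t.isLt.le s), alloc (Fin.castLE t.isLt.le s))

/-! The reported history depends only on reports and allocations, never on the true types, so
the sum over true-type paths factorises period by period, and undetectability turns the
period-`t` factor `∑ θ, f θ σ_t(ĥ_t, θ, θ'_t)` into `f θ'_t`. -/

theorem Fintype.sum_prod_mul_eq_prod_sum_mul {ι κ R : Type*} [Fintype ι] [DecidableEq ι]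
    [Fintype κ] [CommSemiring R] (g : ι → κ → R) (c : ι → R) :
    ∑ p : ι → κ, ∏ t, g t (p t) * c t = ∏ t, (∑ k, g t k) * c t := by
  simp only [prod_mul_distrib, ← sum_mul, Fintype.prod_sum]

theorem undetectable_deviation_same_report_distribution_general
    {Θ A Ω : Type} [Fintype Θ]
    (μ0 : Ω → ℝ)
    (f : Θ → ℝ)
    (T : ℕ)
    (φ : ∀ t : Fin T, Ω → (Fin t → Θ × A) → Θ → A → ℝ)
    (σ : ∀ t : Fin T, (Fin t → Θ × A) → Θ → Θ → ℝ)
    (hundet : ∀ t hh θ', ∑ θ, f θ * σ t hh θ θ' = f θ') :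
    ∀ (ω : Ω) (rep : Fin T → Θ) (alloc : Fin T → A),
      (∑ θpath : Fin T → Θ,
          μ0 ω * ∏ t : Fin T,
            f (θpath t) * σ t (reportedHistory rep alloc t) (θpath t) (rep t) *
              φ t ω (reportedHistory rep alloc t) (rep t) (alloc t))
        = μ0 ω * ∏ t : Fin T,
            f (rep t) * φ t ω (reportedHistory rep alloc t) (rep t) (alloc t) := by
  intro ω rep alloc
  rw [← mul_sum, Fintype.sum_prod_mul_eq_prod_sum_mul
    (fun t θ => f θ * σ t (reportedHistory rep alloc t) θ (rep t))]
  simp only [hundet]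

/-- Undetectable deviations are undetectable: in a `T`-horizon dynamic direct mechanism, if a
reporting strategy `σ` aggregates the type distribution `f` into itself after every reported
history (an undetectable deviation), then summing the induced path probability
`P_σ(ω, (θ_t, θ'_t, a_t)_t) = μ0 ω · ∏_t f(θ_t) σ_t(hh_t, θ_t, θ'_t) φ_t(ω, hh_t, θ'_t, a_t)`
over all true-type paths yields exactly the state–report–allocation path distribution under
truthful reporting, `μ0 ω · ∏_t f(θ'_t) φ_t(ω, hh_t, θ'_t, a_t)`. -/
theorem undetectable_deviation_same_report_distribution
    {Θ A Ω : Type} [Fintype Θ] [Fintype A] [Fintype Ω]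
    [Nonempty Θ] [Nonempty A] [Nonempty Ω]
    (μ0 : Ω → ℝ) (hμ0 : ∀ ω, 0 ≤ μ0 ω) (hμ0sum : ∑ ω, μ0 ω = 1)
    (f : Θ → ℝ) (hf : ∀ θ, 0 ≤ f θ) (hfsum : ∑ θ, f θ = 1)
    (T : ℕ)
    (φ : ∀ t : Fin T, Ω → (Fin t → Θ × A) → Θ → A → ℝ)
    (hφ0 : ∀ t ω hh θ' a, 0 ≤ φ t ω hh θ' a)
    (hφ1 : ∀ t ω hh θ', ∑ a, φ t ω hh θ' a = 1)
    (σ : ∀ t : Fin T, (Fin t → Θ × A) → Θ → Θ → ℝ)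
    (hσ0 : ∀ t hh θ θ', 0 ≤ σ t hh θ θ')
    (hσ1 : ∀ t hh θ, ∑ θ', σ t hh θ θ' = 1)
    (hundet : ∀ t hh θ', ∑ θ, f θ * σ t hh θ θ' = f θ') :
    ∀ (ω : Ω) (rep : Fin T → Θ) (alloc : Fin T → A),
      (∑ θpath : Fin T → Θ,
          μ0 ω * ∏ t : Fin T,
            f (θpath t) * σ t (reportedHistory rep alloc t) (θpath t) (rep t) *
              φ t ω (reportedHistory rep alloc t) (rep t) (alloc t))
        = μ0 ω * ∏ t : Fin T,
            f (rep t) * φ t ω (reportedHistory rep alloc t) (rep t) (alloc t) :=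
  undetectable_deviation_same_report_distribution_general μ0 f T φ σ hundet
end
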